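/- arXiv:2605.15052 — 3 statements merged into one kernel-verified Lean document; each statement's English description precedes it below -/
import Mathlib

section
/- Every left-Cauchy sequence in 𝒫(ℕ) with the quasi-metric d(F,G) = 2^{-min(F\G)} (d(F,G)=0 if F ⊆ G) converges: if (A_n) satisfies ∀ε>0 ∃N ∀m>n>N, d(A_n,A_m) < ε, then there exists A ∈ 𝒫(ℕ) with d(A,A_n) → 0 and d(A_n,A) → 0. -/
/-!
The candidate limit is `liminf A`, the set of points that eventually stay in `A n`.
Since `d F G < 2^{-k}` says exactly that `F ∩ [0, k] ⊆ G`, convergence in either direction is a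
statement about each finite initial segment. `d (liminf A) (A n) → 0` holds for every sequence,
because finitely many points of `liminf A` are eventually all in `A n`; for `d (A n) (liminf A) → 0`,
left-Cauchyness says that a point `j ≤ k` of `A n`, for `n` large, belongs to every later `A m`.
-/

open Classical in
/-- The quasi-metric on `𝒫(ℕ)`: `d F G = 2^{-j}` where `j` is the least element of
`F \ G`, and `d F G = 0` if `F ⊆ G`. -/
noncomputable def dP (F G : Set ℕ) : ℝ :=
  if F ⊆ G then 0 else (2 : ℝ) ^ (-((sInf (F \ G) : ℕ) : ℤ))

open Filter Topology

lemma dP_nonneg (F G : Set ℕ) : 0 ≤ dP F G := by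
  unfold dP; split_ifs <;> positivity

lemma dP_lt_two_zpow_iff {F G : Set ℕ} {k : ℕ} :
    dP F G < 2 ^ (-(k : ℤ)) ↔ ∀ j ≤ k, j ∈ F → j ∈ G := by
  unfold dP
  split_ifs with hFG
  · exact ⟨fun _ j _ hj => hFG hj, fun _ => by positivity⟩
  · have hmem : sInf (F \ G) ∈ F \ G := Nat.sInf_mem (Set.sdiff_nonempty.mpr hFG)
    rw [zpow_lt_zpow_iff_right₀ one_lt_two, neg_lt_neg_iff, Nat.cast_lt]
    constructor
    · intro hk j hjk hjF
      by_contra hjG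
      exact (Nat.sInf_le (show j ∈ F \ G from ⟨hjF, hjG⟩)).not_gt (hjk.trans_lt hk)
    · intro h
      by_contra! hk
      exact hmem.2 (h _ hk hmem.1)

lemma tendsto_dP_nhds_zero_iff {ι : Type*} {l : Filter ι} {F G : ι → Set ℕ} :
    Tendsto (fun i => dP (F i) (G i)) l (𝓝 0) ↔
      ∀ k, ∀ᶠ i in l, ∀ j ≤ k, j ∈ F i → j ∈ G i := by
  have h2 : Tendsto (fun k : ℕ => (2 : ℝ) ^ (-(k : ℤ))) atTop (𝓝 0) := by
    simpa [Function.comp_def, zpow_neg, zpow_natCast] using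
      tendsto_inv_atTop_zero.comp (tendsto_pow_atTop_atTop_of_one_lt one_lt_two)
  simp only [← dP_lt_two_zpow_iff]
  constructor
  · exact fun h k => (tendsto_order.1 h).2 _ (by positivity)
  · intro h
    refine tendsto_order.2 ⟨fun a ha => Eventually.of_forall fun i => ha.trans_le (dP_nonneg _ _),
      fun ε hε => ?_⟩
    obtain ⟨k, hk⟩ := ((tendsto_order.1 h2).2 ε hε).exists
    exact (h k).mono fun i hi => hi.trans hk

lemma tendsto_dP_liminf_left (A : ℕ → Set ℕ) :
    Tendsto (fun n => dP (liminf A atTop) (A n)) atTop (𝓝 0) := by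
  refine tendsto_dP_nhds_zero_iff.2 fun k => ?_
  have hfin : ∀ j ∈ Set.Iic k, ∀ᶠ n in atTop, j ∈ liminf A atTop → j ∈ A n := fun j _ => by
    by_cases hj : j ∈ liminf A atTop
    · exact (mem_liminf_iff_eventually_mem.1 hj).mono fun _ h _ => h
    · exact Eventually.of_forall fun _ h => absurd h hj
  exact ((Set.finite_Iic k).eventually_all.2 hfin).mono fun _ h j hj => h j hj

lemma tendsto_dP_liminf_right (A : ℕ → Set ℕ)
    (hLC : ∀ ε : ℝ, 0 < ε → ∃ N, ∀ m n, N < n → n < m → dP (A n) (A m) < ε) :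
    Tendsto (fun n => dP (A n) (liminf A atTop)) atTop (𝓝 0) := by
  refine tendsto_dP_nhds_zero_iff.2 fun k => ?_
  obtain ⟨N, hN⟩ := hLC _ (by positivity : (0 : ℝ) < 2 ^ (-(k : ℤ)))
  refine eventually_atTop.2 ⟨N + 1, fun n hn j hjk hj => mem_liminf_iff_eventually_mem.2 ?_⟩
  exact eventually_atTop.2 ⟨n + 1, fun m hm => dP_lt_two_zpow_iff.1 (hN m n hn hm) j hjk hj⟩

theorem stmt5 (A : ℕ → Set ℕ)
    (hLC : ∀ ε : ℝ, 0 < ε → ∃ N, ∀ m n, N < n → n < m → dP (A n) (A m) < ε) :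
    ∃ L : Set ℕ,
      Filter.Tendsto (fun n => dP L (A n)) Filter.atTop (nhds 0) ∧
      Filter.Tendsto (fun n => dP (A n) L) Filter.atTop (nhds 0) :=
  ⟨liminf A atTop, tendsto_dP_liminf_left A, tendsto_dP_liminf_right A hLC⟩
end

section
/- Let P be a countable preorder identified with a subset of ℕ, and define g : P → Pfin(ℕ) by g(p) = {q ≤ p (as naturals) : p ≤_P q}. For an unbounded filter F on P, let ĝ(F) = ⋃_{p∈F} g(p) ∈ 𝒫(ℕ). Then ĝ is injective on unbounded filters, and F can be recovered as F = {p ∈ P : p ∈ ĝ(F)}. -/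
/-!
Handiness makes an unbounded filter `F` non-principal, so for `p ∈ F` the set of `q ∈ F` with
`q ≤_P p` has no strictly minimal element and is therefore infinite. One of them exceeds `p` as a
natural number, whence `p ∈ g(q) ⊆ ĝ(F)`; conversely `ĝ(F) ∩ P ⊆ F` by upward closure. Thus `F` is
read off from `ĝ(F)`, and `ĝ` is injective.
-/

/-- `F` is upward closed in `P` with respect to the relation `le`. -/
def UpClosedOn {α : Type*} (le : α → α → Prop) (P F : Set α) : Prop :=
  ∀ p ∈ F, ∀ q ∈ P, le p q → q ∈ F

/-- `F` is a filter on the preordered set `P` (upward closed and downward directed). -/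
def IsFilterOn {α : Type*} (le : α → α → Prop) (P F : Set α) : Prop :=
  F ⊆ P ∧ UpClosedOn le P F ∧ ∀ p ∈ F, ∀ q ∈ F, ∃ r ∈ F, le r p ∧ le r q

/-- `F` is unbounded: no element of `P` is strictly below every element of `F`. -/
def UnboundedOn {α : Type*} (le : α → α → Prop) (P F : Set α) : Prop :=
  ¬ ∃ r ∈ P, ∀ p ∈ F, le r p ∧ ¬ le p r

/-- `F` is non-principal: every element of `F` has a strictly smaller element in `F`. -/
def NonPrincipalOn {α : Type*} (le : α → α → Prop) (F : Set α) : Prop :=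
  ∀ p ∈ F, ∃ q ∈ F, le q p ∧ ¬ le p q

section StrictDescent

variable {α : Type*} {le : α → α → Prop}

theorem Set.infinite_of_forall_exists_strictly_below (htrans : ∀ p q r, le p q → le q r → le p r)
    {S : Set α} (hS : S.Nonempty) (hdesc : ∀ x ∈ S, ∃ y ∈ S, le y x ∧ ¬ le x y) : S.Infinite := by
  intro hfin
  let lt : α → α → Prop := fun a b => le a b ∧ ¬ le b a
  have : IsStrictOrder α lt :=
    { irrefl := fun _ h => h.2 h.1
      trans := fun _ _ _ hab hbc =>
        ⟨htrans _ _ _ hab.1 hbc.1, fun hca => hab.2 (htrans _ _ _ hbc.1 hca)⟩ }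
  obtain ⟨m, hmS, hmin⟩ :=
    (Set.wellFoundedOn_iff.mp (hfin.wellFoundedOn (r := lt))).has_min S hS
  obtain ⟨y, hyS, hym⟩ := hdesc m hmS
  exact hmin y hyS ⟨hym, hyS, hmS⟩

theorem NonPrincipalOn.exists_mem_ge_le [LinearOrder α] [LocallyFiniteOrderBot α]
    (hrefl : ∀ p, le p p) (htrans : ∀ p q r, le p q → le q r → le p r) {F : Set α}
    (hF : NonPrincipalOn le F) {p : α} (hp : p ∈ F) : ∃ q ∈ F, p ≤ q ∧ le q p := by
  have hbelow : {q ∈ F | le q p}.Infinite := by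
    refine Set.infinite_of_forall_exists_strictly_below htrans ⟨p, hp, hrefl p⟩ ?_
    rintro x ⟨hxF, hxp⟩
    obtain ⟨y, hyF, hyx, hxy⟩ := hF x hxF
    exact ⟨y, ⟨hyF, htrans _ _ _ hyx hxp⟩, hyx, hxy⟩
  obtain ⟨q, ⟨hqF, hqp⟩, hpq⟩ := hbelow.exists_gt p
  exact ⟨q, hqF, hpq.le, hqp⟩

end StrictDescent

/-- The set `ĝ(F) = ⋃_{p ∈ F} {q ∈ P | q ≤ p, p ≤_P q}`. -/
def codeUnion (le : ℕ → ℕ → Prop) (P F : Set ℕ) : Set ℕ :=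
  {q | q ∈ P ∧ ∃ p ∈ F, q ≤ p ∧ le p q}

theorem eq_setOf_mem_codeUnion {le : ℕ → ℕ → Prop} (hrefl : ∀ p, le p p)
    (htrans : ∀ p q r, le p q → le q r → le p r) {P F : Set ℕ} (hFP : F ⊆ P)
    (hup : UpClosedOn le P F) (hF : NonPrincipalOn le F) :
    F = {p ∈ P | p ∈ codeUnion le P F} := by
  ext p
  constructor
  · intro hp
    obtain ⟨q, hqF, hpq, hqp⟩ := hF.exists_mem_ge_le hrefl htrans hp
    exact ⟨hFP hp, hFP hp, q, hqF, hpq, hqp⟩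
  · rintro ⟨hpP, -, q, hqF, -, hqp⟩
    exact hup q hqF p hpP hqp

theorem stmt14 (le : ℕ → ℕ → Prop) (hrefl : ∀ p, le p p)
    (htrans : ∀ p q r, le p q → le q r → le p r) (P : Set ℕ)
    -- P is handy: every unbounded filter is non-principal
    (hhandy : ∀ F, IsFilterOn le P F → UnboundedOn le P F → NonPrincipalOn le F) :
    -- ĝ(F) = ⋃_{p ∈ F} g(p), where g(p) = {q ≤ p (as naturals) : p ≤_P q}
    let ghat : Set ℕ → Set ℕ := fun F => {q | q ∈ P ∧ ∃ p ∈ F, q ≤ p ∧ le p q}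
    Set.InjOn ghat {F | IsFilterOn le P F ∧ UnboundedOn le P F} ∧
    ∀ F, IsFilterOn le P F → UnboundedOn le P F → F = {p ∈ P | p ∈ ghat F} := by
  intro ghat
  have recover : ∀ F, IsFilterOn le P F → UnboundedOn le P F →
      F = {p ∈ P | p ∈ ghat F} := fun F hF hub =>
    eq_setOf_mem_codeUnion hrefl htrans hF.1 hF.2.1 (hhandy F hF hub)
  refine ⟨fun F₁ h₁ F₂ h₂ hghat => ?_, recover⟩
  rw [recover F₁ h₁.1 h₁.2, recover F₂ h₂.1 h₂.2, hghat]
end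

section
/- Let (X,d) be a separable Smyth-complete quasi-metric space with countable dense set A (dense with respect to d̂), and let P = A × ℚ₊ ordered by (a,r) < (b,s) iff d(b,a) + r < s. For each point x of X, let φ(x) be the upward closure of {(a_i, 2^{-i+1}) : i ∈ ℕ} for any d̂-Cauchy sequence (a_i) in A representing x with d̂(a_n,a_m) < 2^{-n} for m > n. Then φ(x) is an unbounded filter on P, and φ is a well-defined injection from X into UF(P). -/
/-- `a` is a left-Cauchy sequence with respect to `d`. -/
def LeftCauchy {X : Type*} (d : X → X → ℝ) (a : ℕ → X) : Prop :=
  ∀ ε : ℝ, 0 < ε → ∃ N, ∀ m n, N < n → n < m → d (a n) (a m) < ε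

/-- `(X, d)` is Smyth-complete: every left-Cauchy sequence converges (in both senses). -/
def SmythComplete {X : Type*} (d : X → X → ℝ) : Prop :=
  ∀ a : ℕ → X, LeftCauchy d a →
    ∃ x, Filter.Tendsto (fun n => d x (a n)) Filter.atTop (nhds 0) ∧
         Filter.Tendsto (fun n => d (a n) x) Filter.atTop (nhds 0)

private lemma pow_small16 (ε : ℝ) (hε : 0 < ε) : ∃ i : ℕ, (2:ℝ) ^ (-(i:ℤ)) < ε := by
  obtain ⟨i, hi⟩ := exists_pow_lt_of_lt_one hε (by norm_num : (1:ℝ)/2 < 1)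
  refine ⟨i, ?_⟩
  rw [zpow_neg, zpow_natCast]
  calc ((2:ℝ)^i)⁻¹ = ((1:ℝ)/2)^i := by rw [one_div, inv_pow]
  _ < ε := hi

theorem stmt16 {X : Type*} (d : X → X → ℝ)
    (h0 : ∀ x y, 0 ≤ d x y)
    (hsep : ∀ x y, d x y = 0 → d y x = 0 → x = y)
    (htri : ∀ x y z, d x z ≤ d x y + d y z)
    (hcomp : SmythComplete d)
    (A : Set X) (hAc : A.Countable)
    -- A is dense with respect to d̂
    (hdense : ∀ x : X, ∀ ε : ℝ, 0 < ε → ∃ a ∈ A, max (d x a) (d a x) < ε) :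
    -- the poset P = A × ℚ₊ with (a,r) < (b,s) iff d(b,a) + r < s
    let Pp : Set (X × ℚ) := {y | y.1 ∈ A ∧ 0 < y.2}
    let le' : X × ℚ → X × ℚ → Prop :=
      fun u v => u = v ∨ d v.1 u.1 + (u.2 : ℝ) < (v.2 : ℝ)
    -- a represents x: a d̂-Cauchy sequence from A with modulus 2^{-n} converging to x
    let Rep : X → (ℕ → X) → Prop := fun x a =>
      (∀ n, a n ∈ A) ∧
      (∀ n m, n < m → max (d (a n) (a m)) (d (a m) (a n)) < (2 : ℝ) ^ (-(n : ℤ))) ∧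
      Filter.Tendsto (fun n => max (d x (a n)) (d (a n) x)) Filter.atTop (nhds 0)
    -- φ(x): the upward closure in P of {(a_i, 2^{-i+1}) : i ∈ ℕ}
    let Phi : (ℕ → X) → Set (X × ℚ) :=
      fun a => {y | y ∈ Pp ∧ ∃ i : ℕ, le' (a i, (2 : ℚ) / 2 ^ i) y}
    (∀ x a, Rep x a → IsFilterOn le' Pp (Phi a) ∧ UnboundedOn le' Pp (Phi a)) ∧
    -- φ is well-defined (independent of the representing sequence)
    (∀ x a b, Rep x a → Rep x b → Phi a = Phi b) ∧
    -- φ is injective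
    (∀ x y a b, Rep x a → Rep y b → Phi a = Phi b → x = y) := by
  intro Pp le' Rep Phi
  have hpw : ∀ i : ℕ, (0:ℝ) < 2 ^ (-(i:ℤ)) := fun i => by positivity
  have hcast : ∀ i : ℕ, (((2:ℚ) / 2 ^ i : ℚ) : ℝ) = 2 * 2 ^ (-(i:ℤ)) := by
    intro i
    push_cast
    rw [div_eq_mul_inv, zpow_neg, zpow_natCast]
  have hqpos : ∀ i : ℕ, (0:ℚ) < 2 / 2 ^ i := fun i => by positivity
  -- bounds: d x (a i) ≤ 2^{-i} and d (a i) x ≤ 2^{-i}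
  have hb : ∀ x a, Rep x a → ∀ i : ℕ,
      d x (a i) ≤ 2 ^ (-(i:ℤ)) ∧ d (a i) x ≤ 2 ^ (-(i:ℤ)) := by
    rintro x a ⟨_, hmod, htend⟩ i
    have hsel : ∀ ε : ℝ, 0 < ε → ∃ m, i < m ∧ max (d x (a m)) (d (a m) x) < ε := by
      intro ε hε
      obtain ⟨N, hN⟩ := (Metric.tendsto_atTop.mp htend) ε hε
      refine ⟨max N (i+1), lt_of_lt_of_le (Nat.lt_succ_self i) (le_max_right _ _), ?_⟩
      have := hN (max N (i+1)) (le_max_left _ _)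
      rw [Real.dist_eq, sub_zero] at this
      exact lt_of_abs_lt this
    constructor
    · refine le_of_forall_pos_le_add fun ε hε => ?_
      obtain ⟨m, him, h1⟩ := hsel ε hε
      have h2 := hmod i m him
      have hxm : d x (a m) < ε := lt_of_le_of_lt (le_max_left _ _) h1
      have hima : d (a m) (a i) < 2 ^ (-(i:ℤ)) := lt_of_le_of_lt (le_max_right _ _) h2
      have := htri x (a m) (a i)
      linarith
    · refine le_of_forall_pos_le_add fun ε hε => ?_
      obtain ⟨m, him, h1⟩ := hsel ε hε
      have h2 := hmod i m him
      have hmx : d (a m) x < ε := lt_of_le_of_lt (le_max_right _ _) h1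
      have haim : d (a i) (a m) < 2 ^ (-(i:ℤ)) := lt_of_le_of_lt (le_max_left _ _) h2
      have := htri (a i) (a m) x
      linarith
  -- characterization of Phi a
  have char : ∀ x a, Rep x a → ∀ y : X × ℚ,
      y ∈ Phi a ↔ (y.1 ∈ A ∧ 0 < y.2 ∧ d y.1 x < (y.2 : ℝ)) := by
    intro x a hrep y
    constructor
    · rintro ⟨⟨hA, hpos⟩, i, hle⟩
      refine ⟨hA, hpos, ?_⟩
      rcases hle with heq | hlt
      · subst heq
        have := (hb x a hrep i).2
        have h2 : (((a i, (2:ℚ)/2^i) : X × ℚ).2 : ℝ) = 2 * 2 ^ (-(i:ℤ)) := hcast i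
        rw [h2]
        have := hpw i
        simp only []
        linarith [(hb x a hrep i).2, hpw i]
      · have hlt' : d y.1 (a i) + (((2:ℚ)/2^i : ℚ) : ℝ) < (y.2 : ℝ) := hlt
        rw [hcast i] at hlt'
        have h1 := (hb x a hrep i).2
        have h2 := htri y.1 (a i) x
        linarith [hpw i]
    · rintro ⟨hA, hpos, hlt⟩
      have hd : (0:ℝ) < ((y.2 : ℝ) - d y.1 x) / 3 := by linarith
      obtain ⟨i, hi⟩ := pow_small16 _ hd
      refine ⟨⟨hA, hpos⟩, i, Or.inr ?_⟩
      show d y.1 (a i) + (((2:ℚ)/2^i : ℚ) : ℝ) < (y.2 : ℝ)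
      rw [hcast i]
      have h1 := (hb x a hrep i).1
      have h2 := htri y.1 x (a i)
      linarith
  -- p_i itself is in Phi a
  have hpin : ∀ x a, Rep x a → ∀ i : ℕ, ((a i, (2:ℚ)/2^i) : X × ℚ) ∈ Phi a := by
    intro x a hrep i
    rw [char x a hrep]
    refine ⟨hrep.1 i, hqpos i, ?_⟩
    show d (a i) x < (((2:ℚ)/2^i : ℚ) : ℝ)
    rw [hcast i]
    linarith [(hb x a hrep i).2, hpw i]
  refine ⟨?_, ?_, ?_⟩
  · -- filter and unbounded
    intro x a hrep
    constructor
    · refine ⟨fun y hy => hy.1, ?_, ?_⟩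
      · -- upward closed
        intro p hp q hq hle
        rw [char x a hrep] at hp ⊢
        obtain ⟨hA, hpos, hlt⟩ := hp
        rcases hle with heq | h
        · subst heq; exact ⟨hA, hpos, hlt⟩
        · refine ⟨hq.1, hq.2, ?_⟩
          have h2 := htri q.1 p.1 x
          linarith
      · -- directed
        intro p hp q hq
        rw [char x a hrep] at hp hq
        obtain ⟨hpA, hppos, hplt⟩ := hp
        obtain ⟨hqA, hqpos', hqlt⟩ := hq
        have hd : (0:ℝ) < min ((p.2 : ℝ) - d p.1 x) ((q.2 : ℝ) - d q.1 x) / 3 := by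
          have h1 : (0:ℝ) < (p.2 : ℝ) - d p.1 x := by linarith
          have h2 : (0:ℝ) < (q.2 : ℝ) - d q.1 x := by linarith
          have := lt_min h1 h2
          linarith
        obtain ⟨i, hi⟩ := pow_small16 _ hd
        refine ⟨(a i, (2:ℚ)/2^i), hpin x a hrep i, Or.inr ?_, Or.inr ?_⟩
        · show d p.1 (a i) + (((2:ℚ)/2^i : ℚ) : ℝ) < (p.2 : ℝ)
          rw [hcast i]
          have h1 := (hb x a hrep i).1
          have h2 := htri p.1 x (a i)
          have h3 : min ((p.2 : ℝ) - d p.1 x) ((q.2 : ℝ) - d q.1 x) ≤ (p.2 : ℝ) - d p.1 x :=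
            min_le_left _ _
          linarith
        · show d q.1 (a i) + (((2:ℚ)/2^i : ℚ) : ℝ) < (q.2 : ℝ)
          rw [hcast i]
          have h1 := (hb x a hrep i).1
          have h2 := htri q.1 x (a i)
          have h3 : min ((p.2 : ℝ) - d p.1 x) ((q.2 : ℝ) - d q.1 x) ≤ (q.2 : ℝ) - d q.1 x :=
            min_le_right _ _
          linarith
    · -- unbounded
      rintro ⟨r, hr, hall⟩
      have hr2 : (0:ℝ) < (r.2 : ℝ) := by exact_mod_cast hr.2
      obtain ⟨i, hi⟩ := pow_small16 ((r.2 : ℝ)/2) (by linarith)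
      obtain ⟨h1, h2⟩ := hall _ (hpin x a hrep i)
      rcases h1 with heq | hlt
      · exact h2 (Or.inl heq.symm)
      · have hlt' : d (a i) r.1 + (r.2 : ℝ) < (((2:ℚ)/2^i : ℚ) : ℝ) := hlt
        rw [hcast i] at hlt'
        linarith [h0 (a i) r.1]
  · -- well-defined
    intro x a b ha hb'
    ext y
    rw [char x a ha, char x b hb']
  · -- injective
    intro x y a b hxa hyb heq
    have key1 : d x y = 0 := by
      refine le_antisymm ?_ (h0 x y)
      have : ∀ ε : ℝ, 0 < ε → d x y ≤ 0 + ε := by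
        intro ε hε
        obtain ⟨i, hi⟩ := pow_small16 (ε/3) (by linarith)
        have hmem : ((a i, (2:ℚ)/2^i) : X × ℚ) ∈ Phi b := heq ▸ hpin x a hxa i
        rw [char y b hyb] at hmem
        obtain ⟨_, _, hlt⟩ := hmem
        have hlt' : d (a i) y < (((2:ℚ)/2^i : ℚ) : ℝ) := hlt
        rw [hcast i] at hlt'
        have h1 := (hb x a hxa i).1
        have h2 := htri x (a i) y
        linarith
      linarith [le_of_forall_pos_le_add this]
    have key2 : d y x = 0 := by
      refine le_antisymm ?_ (h0 y x)
      have : ∀ ε : ℝ, 0 < ε → d y x ≤ 0 + ε := by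
        intro ε hε
        obtain ⟨i, hi⟩ := pow_small16 (ε/3) (by linarith)
        have hmem : ((b i, (2:ℚ)/2^i) : X × ℚ) ∈ Phi a := heq ▸ hpin y b hyb i
        rw [char x a hxa] at hmem
        obtain ⟨_, _, hlt⟩ := hmem
        have hlt' : d (b i) x < (((2:ℚ)/2^i : ℚ) : ℝ) := hlt
        rw [hcast i] at hlt'
        have h1 := (hb y b hyb i).1
        have h2 := htri y (b i) x
        linarith
      linarith [le_of_forall_pos_le_add this]
    exact hsep x y key1 key2
end
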